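/- arXiv:1304.6854 — 8 statements merged into one kernel-verified Lean document; each statement's English description precedes it below -/
import Mathlib

section
/- Let C be a Levi category. An arrow a is an atom if and only if the principal right ideal aC is submaximal, i.e. aC ≠ d(a)C and there is no principal right ideal xC with aC ⊊ xC ⊊ d(a)C. -/
open CategoryTheory

universe v u

variable {C : Type u} [Category.{v} C]

/-- The set of all arrows of a category, as a sigma type. -/
abbrev CatArr (C : Type u) [Category.{v} C] : Type (max u v) := Σ (X : C) (Y : C), X ⟶ Y

/-- An arrow is an atom if it is not invertible and in any factorization one factor
is invertible. -/
def IsAtomArrow {X Y : C} (a : X ⟶ Y) : Prop :=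
  ¬ IsIso a ∧ ∀ ⦃Z : C⦄ (b : X ⟶ Z) (c : Z ⟶ Y), a = b ≫ c → IsIso b ∨ IsIso c

/-- The principal right ideal `aC` generated by an arrow `a`. -/
def rIdeal {X Y : C} (a : X ⟶ Y) : Set (CatArr C) :=
  { p | ∃ (Z : C) (b : Y ⟶ Z), p = ⟨X, Z, a ≫ b⟩ }

/-- The principal left ideal `Ca` generated by an arrow `a`. -/
def lIdeal {X Y : C} (a : X ⟶ Y) : Set (CatArr C) :=
  { p | ∃ (Z : C) (b : Z ⟶ X), p = ⟨Z, Y, b ≫ a⟩ }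

/-- The principal two-sided ideal `CaC` generated by an arrow `a`. -/
def twoIdeal {X Y : C} (a : X ⟶ Y) : Set (CatArr C) :=
  { p | ∃ (W Z : C) (b : W ⟶ X) (c : Y ⟶ Z), p = ⟨W, Z, b ≫ a ≫ c⟩ }

/-- A category is left cancellative if `ax = ay` implies `x = y`. -/
def LeftCancellativeCat (C : Type u) [Category.{v} C] : Prop :=
  ∀ ⦃X Y Z : C⦄ (a : X ⟶ Y) (x y : Y ⟶ Z), a ≫ x = a ≫ y → x = y

/-- A category is right cancellative if `xa = ya` implies `x = y`. -/
def RightCancellativeCat (C : Type u) [Category.{v} C] : Prop :=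
  ∀ ⦃X Y Z : C⦄ (x y : X ⟶ Y) (a : Y ⟶ Z), x ≫ a = y ≫ a → x = y

/-- A category is right rigid if principal right ideals that intersect are comparable. -/
def RightRigid (C : Type u) [Category.{v} C] : Prop :=
  ∀ ⦃X Y X' Y' : C⦄ (a : X ⟶ Y) (b : X' ⟶ Y'),
    (rIdeal a ∩ rIdeal b).Nonempty → rIdeal a ⊆ rIdeal b ∨ rIdeal b ⊆ rIdeal a

/-- A category is equidivisible if every equality `ab = cd` admits an intermediate arrow. -/
def Equidivisible (C : Type u) [Category.{v} C] : Prop :=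
  ∀ ⦃W X Y Z : C⦄ (a : W ⟶ X) (b : X ⟶ Z) (c : W ⟶ Y) (d : Y ⟶ Z),
    a ≫ b = c ≫ d →
      (∃ u : Y ⟶ X, a = c ≫ u ∧ d = u ≫ b) ∨ (∃ v : X ⟶ Y, c = a ≫ v ∧ b = v ≫ d)

/-- A length functor on a category: additive on composition, zero exactly on invertible
arrows, one exactly on atoms. -/
structure LengthFunctor (C : Type u) [Category.{v} C] where
  len : ∀ ⦃X Y : C⦄, (X ⟶ Y) → ℕ
  len_comp : ∀ ⦃X Y Z : C⦄ (f : X ⟶ Y) (g : Y ⟶ Z), len (f ≫ g) = len f + len g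
  len_eq_zero_iff : ∀ ⦃X Y : C⦄ (f : X ⟶ Y), len f = 0 ↔ IsIso f
  len_eq_one_iff : ∀ ⦃X Y : C⦄ (f : X ⟶ Y), len f = 1 ↔ IsAtomArrow f

/-- A subset of the arrows is a principal right ideal if it has the form `xC`. -/
def IsPrincipalRightIdeal (S : Set (CatArr C)) : Prop :=
  ∃ (U V : C) (x : U ⟶ V), S = rIdeal x

/-- The interval `[aC, bC]` of principal right ideals between `aC` and `bC`. -/
def rInterval {X Y Z W : C} (a : X ⟶ Y) (b : Z ⟶ W) : Set (Set (CatArr C)) :=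
  { S | IsPrincipalRightIdeal S ∧ rIdeal a ⊆ S ∧ S ⊆ rIdeal b }

/-- A left Rees category: left cancellative, right rigid, and each principal right
ideal is properly contained in only finitely many principal right ideals. -/
def IsLeftReesCategory (C : Type u) [Category.{v} C] : Prop :=
  LeftCancellativeCat C ∧ RightRigid C ∧
    ∀ ⦃X Y : C⦄ (a : X ⟶ Y),
      { S : Set (CatArr C) | IsPrincipalRightIdeal S ∧ rIdeal a ⊂ S }.Finite

/-- A category is skeletal if every invertible arrow has equal domain and codomain. -/
def SkeletalCat (C : Type u) [Category.{v} C] : Prop :=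
  ∀ ⦃X Y : C⦄ (g : X ⟶ Y), IsIso g → X = Y

lemma self_mem_rIdeal {X Y : C} (a : X ⟶ Y) : (⟨X, Y, a⟩ : CatArr C) ∈ rIdeal a :=
  ⟨Y, 𝟙 Y, by simp⟩

lemma mem_rIdeal_dom {X Y Z W : C} (x : Z ⟶ W) (f : X ⟶ Y)
    (h : (⟨X, Y, f⟩ : CatArr C) ∈ rIdeal x) : Z = X := by
  obtain ⟨W', b, h⟩ := h
  exact (congrArg Sigma.fst h).symm

lemma mem_rIdeal_fac {X Y W : C} (x : X ⟶ W) (f : X ⟶ Y)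
    (h : (⟨X, Y, f⟩ : CatArr C) ∈ rIdeal x) : ∃ b : W ⟶ Y, f = x ≫ b := by
  obtain ⟨W', b, h⟩ := h
  injection h with h1 h2
  injection h2 with h3 h4
  subst h3
  exact ⟨b, eq_of_heq h4⟩

lemma rIdeal_subset {X Y Z : C} (x : X ⟶ Z) (a : X ⟶ Y) (b : Z ⟶ Y) (h : a = x ≫ b) :
    rIdeal a ⊆ rIdeal x := by
  rintro p ⟨W, c, rfl⟩
  exact ⟨W, b ≫ c, by rw [h]; simp⟩

lemma rIdeal_eq_of_iso {X Z : C} (x : X ⟶ Z) (hx : IsIso x) :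
    rIdeal x = rIdeal (𝟙 X) := by
  apply Set.Subset.antisymm
  · exact rIdeal_subset (𝟙 X) x x (by simp)
  · exact rIdeal_subset x (𝟙 X) (inv x) (by simp)

/-- In a Levi category, `a` is an atom iff the principal right ideal `aC`
is submaximal: `aC ≠ d(a)C` and no principal right ideal lies strictly between them. -/
theorem atom_iff_submaximal (L : LengthFunctor C) (hE : Equidivisible C)
    (hni : ∃ (X Y : C) (a : X ⟶ Y), ¬ IsIso a) {X Y : C} (a : X ⟶ Y) :
    IsAtomArrow a ↔
      (rIdeal a ≠ rIdeal (𝟙 X) ∧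
        ¬ ∃ (Z W : C) (x : Z ⟶ W), rIdeal a ⊂ rIdeal x ∧ rIdeal x ⊂ rIdeal (𝟙 X)) := by
  constructor
  · rintro ⟨hna, hfac⟩
    constructor
    · intro heq
      have h1 : (⟨X, X, 𝟙 X⟩ : CatArr C) ∈ rIdeal a := by
        rw [heq]; exact self_mem_rIdeal _
      obtain ⟨b, hb⟩ := mem_rIdeal_fac a (𝟙 X) h1
      have := L.len_comp a b
      rw [← hb] at this
      have h0 : L.len (𝟙 X) = 0 := (L.len_eq_zero_iff _).mpr inferInstance
      have : L.len a = 0 := by omega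
      exact hna ((L.len_eq_zero_iff a).mp this)
    · rintro ⟨Z, W, x, h1, h2⟩
      have hZ : Z = X := mem_rIdeal_dom x a (h1.1 (self_mem_rIdeal a))
      subst hZ
      obtain ⟨b, hb⟩ := mem_rIdeal_fac x a (h1.1 (self_mem_rIdeal a))
      rcases hfac x b hb with hx | hb'
      · exact h2.2 (by rw [rIdeal_eq_of_iso x hx])
      · exact h1.2 (rIdeal_subset a x (inv b) (by rw [hb]; simp))
  · rintro ⟨hne, hbet⟩
    constructor
    · intro hiso
      exact hne (rIdeal_eq_of_iso a hiso)
    · intro Z b c habc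
      by_contra hcon
      push_neg at hcon
      obtain ⟨hb, hc⟩ := hcon
      refine hbet ⟨X, Z, b, ⟨rIdeal_subset b a c habc, ?_⟩, ⟨rIdeal_subset (𝟙 X) b b (by simp), ?_⟩⟩
      · intro hsub
        obtain ⟨u, hu⟩ := mem_rIdeal_fac a b (hsub (self_mem_rIdeal b))
        have h1 := L.len_comp a u
        rw [← hu] at h1
        have h2 := L.len_comp b c
        rw [← habc] at h2
        have : L.len c = 0 := by omega
        exact hc ((L.len_eq_zero_iff c).mp this)
      · intro hsub
        obtain ⟨u, hu⟩ := mem_rIdeal_fac b (𝟙 X) (hsub (self_mem_rIdeal (𝟙 X)))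
        have h1 := L.len_comp b u
        rw [← hu] at h1
        have h0 : L.len (𝟙 X) = 0 := (L.len_eq_zero_iff _).mpr inferInstance
        have : L.len b = 0 := by omega
        exact hb ((L.len_eq_zero_iff b).mp this)
end

section
/- Let C be a Levi category. Then: (i) every non-invertible arrow a of C can be written a = a'b where a' is an atom; (ii) every non-invertible arrow of C can be written as a finite product of atoms. -/
open CategoryTheory

universe v u

variable {C : Type u} [Category.{v} C]

/-- The predicate of being a finite product of atoms. -/
inductive IsProdOfAtoms : ∀ {X Y : C}, (X ⟶ Y) → Prop
  | of {X Y : C} (a : X ⟶ Y) (h : IsAtomArrow a) : IsProdOfAtoms a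
  | comp {X Y Z : C} (a : X ⟶ Y) (b : Y ⟶ Z) (h : IsAtomArrow a)
      (hb : IsProdOfAtoms b) : IsProdOfAtoms (a ≫ b)

lemma IsProdOfAtoms.comp' {X Y Z : C} {a : X ⟶ Y} {b : Y ⟶ Z}
    (ha : IsProdOfAtoms a) (hb : IsProdOfAtoms b) : IsProdOfAtoms (a ≫ b) := by
  induction ha with
  | of a h => exact IsProdOfAtoms.comp a b h hb
  | comp a c h hc ih => rw [Category.assoc]; exact IsProdOfAtoms.comp a (c ≫ b) h (ih hb)

lemma prodOfAtoms_aux (L : LengthFunctor C) :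
    ∀ (n : ℕ) ⦃X Y : C⦄ (a : X ⟶ Y), L.len a = n → ¬ IsIso a → IsProdOfAtoms a := by
  intro n
  induction n using Nat.strong_induction_on with
  | _ n ih =>
    intro X Y a hn ha
    by_cases hat : IsAtomArrow a
    · exact IsProdOfAtoms.of a hat
    · have hne : L.len a ≠ 0 := fun h => ha ((L.len_eq_zero_iff a).mp h)
      simp only [IsAtomArrow, not_and, not_forall] at hat
      obtain ⟨Z, b, c, hbc, hbor⟩ := hat ha
      push_neg at hbor
      obtain ⟨hb, hc⟩ := hbor
      have hlb : L.len b ≠ 0 := fun h => hb ((L.len_eq_zero_iff b).mp h)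
      have hlc : L.len c ≠ 0 := fun h => hc ((L.len_eq_zero_iff c).mp h)
      have hsum : L.len b + L.len c = n := by rw [← L.len_comp, ← hbc, hn]
      have h1 : L.len b < n := by omega
      have h2 : L.len c < n := by omega
      rw [hbc]
      exact (ih _ h1 b rfl hb).comp' (ih _ h2 c rfl hc)

/-- In a Levi category, every non-invertible arrow `a` can be written
`a = a'b` with `a'` an atom, and every non-invertible arrow is a finite product of
atoms. -/
theorem exists_atom_factor_and_prod_of_atoms (L : LengthFunctor C) (hE : Equidivisible C)
    (hni : ∃ (X Y : C) (a : X ⟶ Y), ¬ IsIso a) {X Y : C} (a : X ⟶ Y) (ha : ¬ IsIso a) :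
    (∃ (Z : C) (a' : X ⟶ Z) (b : Z ⟶ Y), IsAtomArrow a' ∧ a = a' ≫ b) ∧
      IsProdOfAtoms a := by
  have hp := prodOfAtoms_aux L (L.len a) a rfl ha
  refine ⟨?_, hp⟩
  induction hp with
  | of b h => exact ⟨_, b, 𝟙 _, h, (Category.comp_id b).symm⟩
  | comp b c h _ _ => exact ⟨_, b, c, h, rfl⟩
end

section
/- Let C be a Levi category and suppose that x = a₁a₂⋯a_m = b₁b₂⋯b_n where all the a_i and b_j are atoms. Then: (i) m = n; (ii) there exist invertible arrows g₁, …, g_{n−1} such that a₁ = b₁g₁, a_i = g_{i−1}⁻¹ b_i g_i for 2 ≤ i ≤ n−1, and a_n = g_{n−1}⁻¹ b_n. -/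
open CategoryTheory

universe v u

variable {C : Type u} [Category.{v} C]

/-- The composite `f 0 ≫ f 1 ≫ ⋯ ≫ f (n-1)` of a composable chain of arrows. -/
def chainComp : ∀ {n : ℕ} {X : Fin (n + 1) → C},
    (∀ i : Fin n, X i.castSucc ⟶ X i.succ) →
      (X ⟨0, Nat.succ_pos n⟩ ⟶ X ⟨n, Nat.lt_succ_self n⟩)
  | 0, _, _ => 𝟙 _
  | n + 1, X, f =>
      f ⟨0, Nat.succ_pos n⟩ ≫ chainComp (X := fun i => X i.succ) (fun i => f i.succ)

/-!
Write both factorizations as `a₁ ≫ (a₂ ⋯ aₘ) = b₁ ≫ (b₂ ⋯ bₙ)`. Equidivisibility produces an arrow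
`u` with `a₁ = b₁ ≫ u` and `u ≫ (a₂ ⋯ aₘ) = b₂ ⋯ bₙ` (or the symmetric one); since `a₁` and `b₁` are
atoms, both of length one, `u` has length zero and is invertible. Iterating along the chains, with
`u` absorbed into the next factor, yields the ladder of isomorphisms; `m = n` is read off the
lengths of the two sides.
-/

namespace LengthFunctor

variable (L : LengthFunctor C)

lemma len_eq_zero_of_isIso {X Y : C} (f : X ⟶ Y) [IsIso f] : L.len f = 0 :=
  (L.len_eq_zero_iff f).mpr ‹_›

lemma len_eq_one_of_isAtomArrow {X Y : C} {f : X ⟶ Y} (hf : IsAtomArrow f) : L.len f = 1 :=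
  (L.len_eq_one_iff f).mpr hf

lemma len_chainComp :
    ∀ {m : ℕ} {X : Fin (m + 1) → C} (a : ∀ i : Fin m, X i.castSucc ⟶ X i.succ),
      L.len (chainComp a) = ∑ i, L.len (a i)
  | 0, _, _ => L.len_eq_zero_of_isIso (𝟙 _)
  | m + 1, X, a => by
    rw [Fin.sum_univ_succ, ← len_chainComp (X := fun i => X i.succ) (fun i => a i.succ)]
    exact L.len_comp _ _

lemma len_chainComp_of_isAtomArrow {m : ℕ} {X : Fin (m + 1) → C}
    {a : ∀ i : Fin m, X i.castSucc ⟶ X i.succ} (ha : ∀ i, IsAtomArrow (a i)) :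
    L.len (chainComp a) = m := by
  rw [len_chainComp]
  simp [fun i => L.len_eq_one_of_isAtomArrow (ha i)]

lemma exists_isIso_of_comp_eq_of_len_eq (hE : Equidivisible C) {W X Y Z : C}
    {a : W ⟶ X} {x : X ⟶ Z} {b : W ⟶ Y} {y : Y ⟶ Z}
    (hab : a ≫ x = b ≫ y) (hlen : L.len a = L.len b) :
    ∃ u : Y ⟶ X, IsIso u ∧ a = b ≫ u ∧ u ≫ x = y := by
  rcases hE a x b y hab with ⟨u, rfl, rfl⟩ | ⟨v, rfl, rfl⟩
  · have : IsIso u := (L.len_eq_zero_iff u).mp (by rw [L.len_comp] at hlen; omega)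
    exact ⟨u, this, rfl, rfl⟩
  · have : IsIso v := (L.len_eq_zero_iff v).mp (by rw [L.len_comp] at hlen; omega)
    exact ⟨inv v, inferInstance, by simp, by simp⟩

theorem exists_isIso_ladder_of_chainComp_eq (hE : Equidivisible C) :
    ∀ {m : ℕ} {X Y : Fin (m + 1) → C}
      (a : ∀ i : Fin m, X i.castSucc ⟶ X i.succ) (b : ∀ i : Fin m, Y i.castSucc ⟶ Y i.succ),
      (∀ i, L.len (a i) = L.len (b i)) →
      ∀ (g₀ : Y ⟨0, Nat.succ_pos m⟩ ⟶ X ⟨0, Nat.succ_pos m⟩) [IsIso g₀]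
        (gₘ : Y ⟨m, Nat.lt_succ_self m⟩ ⟶ X ⟨m, Nat.lt_succ_self m⟩),
      g₀ ≫ chainComp a = chainComp b ≫ gₘ →
      ∃ g : ∀ j, Y j ⟶ X j, (∀ j, IsIso (g j)) ∧ g ⟨0, Nat.succ_pos m⟩ = g₀ ∧
        g ⟨m, Nat.lt_succ_self m⟩ = gₘ ∧ ∀ i, g i.castSucc ≫ a i = b i ≫ g i.succ
  | 0, X, Y, _, _, _, g₀, _, gₘ, h => by
    have hg : g₀ = gₘ := by simpa [chainComp] using h
    exact ⟨Fin.cases (motive := fun j => Y j ⟶ X j) g₀ (fun i => i.elim0),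
      Fin.cases ‹_› (fun i => i.elim0), rfl, hg, fun i => i.elim0⟩
  | m + 1, X, Y, a, b, hlen, g₀, _, gₘ, h => by
    have hhead : (g₀ ≫ a ⟨0, Nat.succ_pos m⟩) ≫ chainComp (X := fun i => X i.succ)
        (fun i => a i.succ) = b ⟨0, Nat.succ_pos m⟩ ≫ chainComp (X := fun i => Y i.succ)
          (fun i => b i.succ) ≫ gₘ := by
      simpa only [chainComp, Category.assoc] using h
    obtain ⟨u, _, hu, htail⟩ := L.exists_isIso_of_comp_eq_of_len_eq hE hhead
      (by rw [L.len_comp, L.len_eq_zero_of_isIso, zero_add, hlen])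
    obtain ⟨g, hg, rfl, hgₘ, hsq⟩ := exists_isIso_ladder_of_chainComp_eq hE
      (X := fun i => X i.succ) (Y := fun i => Y i.succ) (fun i => a i.succ) (fun i => b i.succ)
      (fun i => hlen i.succ) u gₘ htail
    exact ⟨Fin.cases (motive := fun j => Y j ⟶ X j) g₀ g, Fin.cases ‹_› hg, rfl, hgₘ,
      Fin.cases hu hsq⟩

end LengthFunctor

/-- In a Levi category, if `x = a₁⋯a_m = b₁⋯b_n` with all `a_i, b_j` atoms,
then `m = n` and there are invertible arrows interleaving the two factorizations:
`a₁ = b₁g₁`, `a_i = g_{i-1}⁻¹ b_i g_i`, `a_n = g_{n-1}⁻¹ b_n`.  The interleaving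
isomorphisms are packaged as a family `g j : Y j ⟶ X j` (invertible for all `j`, and
equal to the canonical identifications at the two endpoints) satisfying
`g_{i} ≫ a_{i+1} = b_{i+1} ≫ g_{i+1}`. -/
theorem length_eq_and_interleaving_of_two_atom_factorizations
    (L : LengthFunctor C) (hE : Equidivisible C)
    {m n : ℕ} {X : Fin (m + 1) → C} {Y : Fin (n + 1) → C}
    (a : ∀ i : Fin m, X i.castSucc ⟶ X i.succ)
    (b : ∀ i : Fin n, Y i.castSucc ⟶ Y i.succ)
    (ha : ∀ i, IsAtomArrow (a i)) (hb : ∀ i, IsAtomArrow (b i))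
    (h0 : X ⟨0, Nat.succ_pos m⟩ = Y ⟨0, Nat.succ_pos n⟩)
    (h1 : X ⟨m, Nat.lt_succ_self m⟩ = Y ⟨n, Nat.lt_succ_self n⟩)
    (hx : chainComp a = eqToHom h0 ≫ chainComp b ≫ eqToHom h1.symm) :
    m = n ∧
      ∃ (h : m = n) (g : ∀ j : Fin (m + 1), Y (Fin.cast (congrArg Nat.succ h) j) ⟶ X j),
        (∀ j, IsIso (g j)) ∧
        g ⟨0, Nat.succ_pos m⟩ = eqToHom h0.symm ∧
        g ⟨m, Nat.lt_succ_self m⟩ = eqToHom (by subst h; exact h1.symm) ∧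
        ∀ i : Fin m, g i.castSucc ≫ a i = b (Fin.cast h i) ≫ g i.succ := by
  have hmn : m = n := by
    have hx_len := congrArg (fun f => L.len f) hx
    simp only [L.len_comp, L.len_chainComp_of_isAtomArrow ha, L.len_chainComp_of_isAtomArrow hb,
      L.len_eq_zero_of_isIso] at hx_len
    omega
  subst hmn
  have hlen : ∀ i, L.len (a i) = L.len (b i) := fun i => by
    rw [L.len_eq_one_of_isAtomArrow (ha i), L.len_eq_one_of_isAtomArrow (hb i)]
  obtain ⟨g, hg⟩ := L.exists_isIso_ladder_of_chainComp_eq hE a b hlen (eqToHom h0.symm)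
    (eqToHom h1.symm) (by rw [hx, eqToHom_trans_assoc, eqToHom_refl, Category.id_comp])
  exact ⟨rfl, rfl, g, hg⟩
end

section
/- Let C be a skeletal Levi category and suppose that x = a₁a₂⋯a_n = b₁b₂⋯b_n where all the a_i and b_j are atoms. Then a_i is parallel to b_i for each i = 1, …, n, i.e. d(a_i) = d(b_i) and r(a_i) = r(b_i). -/
open CategoryTheory

universe v u

variable {C : Type u} [Category.{v} C]

/-!
Equidivisibility applied to `a₁(a₂⋯aₙ) = b₁(b₂⋯bₙ)` makes one of `a₁`, `b₁` a right multiple of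
the other; as both have length one, the quotient has length zero and is invertible. Cancelling
it leaves two factorizations of one arrow that agree up to an invertible arrow in front, so by
induction the intermediate objects of the two factorizations are isomorphic, hence equal in a
skeletal category.
-/

lemma LengthFunctor.exists_isIso_of_comp_eq_comp (L : LengthFunctor C) (hE : Equidivisible C)
    {W X Y Z : C} {a : W ⟶ X} {p : X ⟶ Z} {b : W ⟶ Y} {q : Y ⟶ Z}
    (h : a ≫ p = b ≫ q) (hlen : L.len a = L.len b) :
    ∃ u : Y ⟶ X, IsIso u ∧ a = b ≫ u ∧ q = u ≫ p := by
  rcases hE a p b q h with ⟨u, hau, hqu⟩ | ⟨v, hbv, hpv⟩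
  · have hu : L.len u = 0 := by
      have := congrArg (fun f => L.len f) hau
      simp only [L.len_comp] at this
      omega
    exact ⟨u, (L.len_eq_zero_iff u).mp hu, hau, hqu⟩
  · have hv : L.len v = 0 := by
      have := congrArg (fun f => L.len f) hbv
      simp only [L.len_comp] at this
      omega
    have := (L.len_eq_zero_iff v).mp hv
    exact ⟨inv v, inferInstance, by simp [hbv], by simp [hpv]⟩

lemma chainComp_succ {n : ℕ} {X : Fin (n + 2) → C}
    (f : ∀ i : Fin (n + 1), X i.castSucc ⟶ X i.succ) :
    chainComp f =
      f ⟨0, Nat.succ_pos n⟩ ≫ chainComp (X := fun i => X i.succ) (fun i => f i.succ) :=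
  rfl

lemma LengthFunctor.nonempty_iso_of_chainComp_eq (L : LengthFunctor C) (hE : Equidivisible C) :
    ∀ {n : ℕ} {X Y : Fin (n + 1) → C}
      (a : ∀ i : Fin n, X i.castSucc ⟶ X i.succ) (b : ∀ i : Fin n, Y i.castSucc ⟶ Y i.succ)
      (g : X ⟨0, Nat.succ_pos n⟩ ≅ Y ⟨0, Nat.succ_pos n⟩)
      (h : Y ⟨n, Nat.lt_succ_self n⟩ ⟶ X ⟨n, Nat.lt_succ_self n⟩),
      (∀ i, L.len (a i) = L.len (b i)) → chainComp a = g.hom ≫ chainComp b ≫ h →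
      ∀ i, Nonempty (X i ≅ Y i)
  | 0, _, _, _, _, g, _, _, _, i => by
    obtain rfl : i = ⟨0, Nat.succ_pos 0⟩ := Fin.ext (by omega)
    exact ⟨g⟩
  | n + 1, X, Y, a, b, g, h, hlen, hab, i => by
    have hsplit :
        a ⟨0, Nat.succ_pos n⟩ ≫ chainComp (X := fun i => X i.succ) (fun i => a i.succ) =
        (g.hom ≫ b ⟨0, Nat.succ_pos n⟩) ≫
          chainComp (X := fun i => Y i.succ) (fun i => b i.succ) ≫ h := by
      simpa only [chainComp_succ, Category.assoc] using hab
    obtain ⟨u, hu, -, hrest⟩ := L.exists_isIso_of_comp_eq_comp hE hsplit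
      (by rw [L.len_comp, (L.len_eq_zero_iff g.hom).mpr inferInstance, zero_add, hlen])
    have htail : chainComp (X := fun i => X i.succ) (fun i => a i.succ) =
        (asIso u).symm.hom ≫ chainComp (X := fun i => Y i.succ) (fun i => b i.succ) ≫ h := by
      rw [hrest, Iso.symm_hom, asIso_inv, IsIso.inv_hom_id_assoc]
    refine Fin.cases ⟨g⟩ (fun j => ?_) i
    exact L.nonempty_iso_of_chainComp_eq hE (X := fun i => X i.succ) (Y := fun i => Y i.succ)
      (fun i => a i.succ) (fun i => b i.succ) (asIso u).symm h (fun i => hlen i.succ) htail j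

theorem parallel_of_two_atom_factorizations_of_skeletal_general
    (L : LengthFunctor C) (hE : Equidivisible C)
    (hsk : SkeletalCat C)
    {n : ℕ} {X : Fin (n + 1) → C} {Y : Fin (n + 1) → C}
    (a : ∀ i : Fin n, X i.castSucc ⟶ X i.succ)
    (b : ∀ i : Fin n, Y i.castSucc ⟶ Y i.succ)
    (ha : ∀ i, IsAtomArrow (a i)) (hb : ∀ i, IsAtomArrow (b i))
    (h0 : X ⟨0, Nat.succ_pos n⟩ = Y ⟨0, Nat.succ_pos n⟩)
    (h1 : X ⟨n, Nat.lt_succ_self n⟩ = Y ⟨n, Nat.lt_succ_self n⟩)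
    (hx : chainComp a = eqToHom h0 ≫ chainComp b ≫ eqToHom h1.symm) :
    ∀ i : Fin n, X i.castSucc = Y i.castSucc ∧ X i.succ = Y i.succ := by
  have hlen : ∀ i, L.len (a i) = L.len (b i) := fun i => by
    rw [(L.len_eq_one_iff _).mpr (ha i), (L.len_eq_one_iff _).mpr (hb i)]
  have hiso := L.nonempty_iso_of_chainComp_eq hE a b (eqToIso h0) _ hlen hx
  have heq : ∀ j, X j = Y j := fun j => hsk _ (hiso j).some.isIso_hom
  exact fun i => ⟨heq _, heq _⟩

/-- In a skeletal Levi category, if `x = a₁⋯a_n = b₁⋯b_n` with all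
`a_i, b_j` atoms, then `a_i` is parallel to `b_i` for each `i`:
`d(a_i) = d(b_i)` and `r(a_i) = r(b_i)`. -/
theorem parallel_of_two_atom_factorizations_of_skeletal
    (L : LengthFunctor C) (hE : Equidivisible C)
    (hni : ∃ (X Y : C) (a : X ⟶ Y), ¬ IsIso a) (hsk : SkeletalCat C)
    {n : ℕ} {X : Fin (n + 1) → C} {Y : Fin (n + 1) → C}
    (a : ∀ i : Fin n, X i.castSucc ⟶ X i.succ)
    (b : ∀ i : Fin n, Y i.castSucc ⟶ Y i.succ)
    (ha : ∀ i, IsAtomArrow (a i)) (hb : ∀ i, IsAtomArrow (b i))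
    (h0 : X ⟨0, Nat.succ_pos n⟩ = Y ⟨0, Nat.succ_pos n⟩)
    (h1 : X ⟨n, Nat.lt_succ_self n⟩ = Y ⟨n, Nat.lt_succ_self n⟩)
    (hx : chainComp a = eqToHom h0 ≫ chainComp b ≫ eqToHom h1.symm) :
    ∀ i : Fin n, X i.castSucc = Y i.castSucc ∧ X i.succ = Y i.succ :=
  parallel_of_two_atom_factorizations_of_skeletal_general L hE hsk a b ha hb h0 h1 hx
end

section
/- A left cancellative category C is right rigid if and only if it is equidivisible. -/
open CategoryTheory

universe v u

variable {C : Type u} [Category.{v} C]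

lemma catArr_inj {X X' Y Y' : C} {f : X ⟶ Y} {g : X' ⟶ Y'}
    (h : (⟨X, Y, f⟩ : CatArr C) = ⟨X', Y', g⟩) :
    X = X' ∧ Y = Y' ∧ HEq f g := by
  obtain ⟨h1, h2⟩ := Sigma.mk.inj_iff.mp h
  subst h1
  obtain ⟨h2, h3⟩ := Sigma.mk.inj_iff.mp (eq_of_heq h2)
  exact ⟨rfl, h2, h3⟩

/-- A left cancellative category is right rigid iff it is equidivisible. -/
theorem rightRigid_iff_equidivisible (hLC : LeftCancellativeCat C) :
    RightRigid C ↔ Equidivisible C := by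
  constructor
  · intro hRR W X Y Z a b c d hab
    have hne : (rIdeal a ∩ rIdeal c).Nonempty :=
      ⟨⟨W, Z, a ≫ b⟩, ⟨Z, b, rfl⟩, ⟨Z, d, by rw [hab]⟩⟩
    rcases hRR a c hne with h | h
    · left
      obtain ⟨Z', u, hu⟩ := h (show (⟨W, X, a⟩ : CatArr C) ∈ rIdeal a from ⟨X, 𝟙 X, by simp⟩)
      obtain ⟨-, h2, h3⟩ := catArr_inj hu
      subst h2
      have ha : a = c ≫ u := by simpa using eq_of_heq h3
      refine ⟨u, ha, hLC c d (u ≫ b) ?_⟩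
      rw [← hab, ha, Category.assoc]
    · right
      obtain ⟨Z', v, hv⟩ := h (show (⟨W, Y, c⟩ : CatArr C) ∈ rIdeal c from ⟨Y, 𝟙 Y, by simp⟩)
      obtain ⟨-, h2, h3⟩ := catArr_inj hv
      subst h2
      have hc : c = a ≫ v := by simpa using eq_of_heq h3
      refine ⟨v, hc, hLC a b (v ≫ d) ?_⟩
      rw [hab, hc, Category.assoc]
  · intro hED X Y X' Y' a b hne
    obtain ⟨p, ⟨Z1, s, hp1⟩, ⟨Z2, t, hp2⟩⟩ := hne
    obtain ⟨hX, hZ, h3⟩ := catArr_inj (hp1 ▸ hp2 : (⟨X, Z1, a ≫ s⟩ : CatArr C) = ⟨X', Z2, b ≫ t⟩)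
    subst hX; subst hZ
    have heq : a ≫ s = b ≫ t := eq_of_heq h3
    rcases hED b t a s heq.symm with ⟨u, hu1, hu2⟩ | ⟨v, hv1, hv2⟩
    · right
      rintro q ⟨Zq, cq, rfl⟩
      exact ⟨Zq, u ≫ cq, by rw [hu1, Category.assoc]⟩
    · left
      rintro q ⟨Zq, cq, rfl⟩
      exact ⟨Zq, v ≫ cq, by rw [hv1, Category.assoc]⟩
end

section
/- A left cancellative, right rigid category is a left Rees category (each principal right ideal is properly contained in only finitely many distinct principal right ideals) if and only if it admits a length functor. In other words, the left Rees categories are precisely the left cancellative equidivisible categories equipped with length functors. -/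
open CategoryTheory

universe v u

variable {C : Type u} [Category.{v} C]

namespace ReesAux

variable {C : Type u} [Category.{v} C]

lemma ssub_iff {α : Type*} {s t : Set α} : s ⊂ t ↔ s ⊆ t ∧ ¬ t ⊆ s := by
  rw [Set.ssubset_def]

lemma self_mem {X Y : C} (a : X ⟶ Y) : (⟨X, Y, a⟩ : CatArr C) ∈ rIdeal a :=
  ⟨Y, 𝟙 Y, by simp⟩

lemma mem_dom {X Y X' Y' : C} {a : X ⟶ Y} {f : X' ⟶ Y'}
    (h : (⟨X', Y', f⟩ : CatArr C) ∈ rIdeal a) : X' = X := by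
  obtain ⟨Z, b, h⟩ := h
  exact congrArg Sigma.fst h

lemma mem_iff {X Y W : C} (a : X ⟶ Y) (f : X ⟶ W) :
    (⟨X, W, f⟩ : CatArr C) ∈ rIdeal a ↔ ∃ u : Y ⟶ W, f = a ≫ u := by
  constructor
  · rintro ⟨Z, c, h⟩
    obtain ⟨-, h⟩ := Sigma.mk.inj_iff.mp h
    obtain ⟨rfl, h⟩ := Sigma.mk.inj_iff.mp (eq_of_heq h)
    exact ⟨c, eq_of_heq h⟩
  · rintro ⟨u, rfl⟩
    exact ⟨W, u, rfl⟩

lemma subset_iff {X Y Z : C} (a : X ⟶ Y) (b : X ⟶ Z) :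
    rIdeal a ⊆ rIdeal b ↔ ∃ u : Z ⟶ Y, a = b ≫ u := by
  constructor
  · intro h
    exact (mem_iff b a).mp (h (self_mem a))
  · rintro ⟨u, rfl⟩ p ⟨V, w, rfl⟩
    exact ⟨V, u ≫ w, by simp⟩

lemma isIso_of_comp_eq_id (hLC : LeftCancellativeCat C) {X Y : C} {g : X ⟶ Y} {u : Y ⟶ X}
    (h : g ≫ u = 𝟙 X) : IsIso g := by
  have h2 : u ≫ g = 𝟙 Y := hLC g (u ≫ g) (𝟙 Y) (by rw [← Category.assoc, h]; simp)
  exact ⟨u, h, h2⟩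

lemma rIdeal_iso {X Y : C} (g : X ⟶ Y) (hg : IsIso g) : rIdeal g = rIdeal (𝟙 X) := by
  apply Set.Subset.antisymm
  · exact (subset_iff _ _).mpr ⟨g, (Category.id_comp g).symm⟩
  · exact (subset_iff _ _).mpr ⟨inv g, by simp⟩

lemma isIso_of_id_subset (hLC : LeftCancellativeCat C) {X Y : C} {g : X ⟶ Y}
    (h : rIdeal (𝟙 X) ⊆ rIdeal g) : IsIso g := by
  obtain ⟨u, hu⟩ := (subset_iff (𝟙 X) g).mp h
  exact isIso_of_comp_eq_id hLC hu.symm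

lemma exists_gen {X Y : C} (a : X ⟶ Y) {S : Set (CatArr C)}
    (hP : IsPrincipalRightIdeal S) (hsub : rIdeal a ⊆ S) :
    ∃ (V : C) (b : X ⟶ V) (u : V ⟶ Y), S = rIdeal b ∧ a = b ≫ u := by
  obtain ⟨U, V, x, rfl⟩ := hP
  have hd : X = U := mem_dom (hsub (self_mem a))
  subst hd
  obtain ⟨u, hu⟩ := (subset_iff a x).mp hsub
  exact ⟨V, x, u, rfl, hu⟩

noncomputable def rlen {X Y : C} (a : X ⟶ Y) : ℕ :=
  {S : Set (CatArr C) | IsPrincipalRightIdeal S ∧ rIdeal a ⊂ S}.ncard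

lemma id_mem_total (hLC : LeftCancellativeCat C) {X Y : C} {a : X ⟶ Y} (ha : ¬ IsIso a) :
    rIdeal (𝟙 X) ∈ {S : Set (CatArr C) | IsPrincipalRightIdeal S ∧ rIdeal a ⊂ S} :=
  ⟨⟨X, X, 𝟙 X, rfl⟩, ssub_iff.mpr ⟨(subset_iff _ _).mpr ⟨a, (Category.id_comp a).symm⟩,
    fun h => ha (isIso_of_id_subset hLC h)⟩⟩

lemma rlen_eq_zero (hLC : LeftCancellativeCat C) {X Y : C} (a : X ⟶ Y)
    (hFin : ({S : Set (CatArr C) | IsPrincipalRightIdeal S ∧ rIdeal a ⊂ S}).Finite) :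
    rlen a = 0 ↔ IsIso a := by
  constructor
  · intro h
    by_contra hni
    have hmem := id_mem_total hLC (a := a) hni
    rw [(Set.ncard_eq_zero hFin).mp h] at hmem
    exact hmem
  · intro h
    have hempty : {S : Set (CatArr C) | IsPrincipalRightIdeal S ∧ rIdeal a ⊂ S} = ∅ := by
      rw [Set.eq_empty_iff_forall_notMem]
      rintro S ⟨hP, hss⟩
      obtain ⟨V, c, w, rfl, hcw⟩ := exists_gen a hP hss.subset
      have hid : (⟨X, X, 𝟙 X⟩ : CatArr C) ∈ rIdeal c := by
        have : (⟨X, X, 𝟙 X⟩ : CatArr C) ∈ rIdeal a := by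
          rw [rIdeal_iso a h]; exact self_mem _
        exact hss.subset this
      obtain ⟨u, hu⟩ := (mem_iff c (𝟙 X)).mp hid
      have hc : IsIso c := isIso_of_comp_eq_id hLC hu.symm
      exact hss.ne (by rw [rIdeal_iso a h, rIdeal_iso c hc])
    rw [rlen, hempty, Set.ncard_empty]

lemma rigid_of_equidiv (hEq : Equidivisible C) : RightRigid C := by
  rintro X Y X' Y' a b ⟨p, hpa, hpb⟩
  obtain ⟨Z, u, rfl⟩ := hpa
  have hX : X = X' := mem_dom hpb
  subst hX
  obtain ⟨v, hv⟩ := (mem_iff b (a ≫ u)).mp hpb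
  rcases hEq a u b v hv with ⟨w, hw, -⟩ | ⟨w, hw, -⟩
  · exact Or.inl ((subset_iff a b).mpr ⟨w, hw⟩)
  · exact Or.inr ((subset_iff b a).mpr ⟨w, hw⟩)

lemma equidiv_of_rigid (hLC : LeftCancellativeCat C) (hRR : RightRigid C) :
    Equidivisible C := by
  intro W X Y Z a b c d h
  have hne : (rIdeal a ∩ rIdeal c).Nonempty :=
    ⟨⟨W, Z, a ≫ b⟩, ⟨Z, b, rfl⟩, ⟨Z, d, by rw [h]⟩⟩
  rcases hRR a c hne with h1 | h1
  · obtain ⟨u, hu⟩ := (subset_iff a c).mp h1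
    exact Or.inl ⟨u, hu, hLC c _ _ (by rw [← h, hu, Category.assoc])⟩
  · obtain ⟨v, hv⟩ := (subset_iff c a).mp h1
    exact Or.inr ⟨v, hv, hLC a _ _ (by rw [h, hv, Category.assoc])⟩

lemma finite_of_lengthFunctor (hLC : LeftCancellativeCat C) (hRR : RightRigid C)
    (L : LengthFunctor C) {X Y : C} (a : X ⟶ Y) :
    {S : Set (CatArr C) | IsPrincipalRightIdeal S ∧ rIdeal a ⊂ S}.Finite := by
  classical
  set M := {S : Set (CatArr C) | IsPrincipalRightIdeal S ∧ rIdeal a ⊂ S} with hM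
  set g : Set (CatArr C) → ℕ := fun S => sInf ((fun p : CatArr C => L.len p.2.2) '' S) with hg
  have hgval : ∀ {U V : C} (b : U ⟶ V), g (rIdeal b) = L.len b := by
    intro U V b
    refine le_antisymm (Nat.sInf_le ⟨⟨U, V, b⟩, self_mem b, rfl⟩) (le_csInf ⟨L.len b, ⟨U, V, b⟩, self_mem b, rfl⟩ ?_)
    rintro x ⟨p, ⟨Wp, w, rfl⟩, rfl⟩
    show L.len b ≤ L.len (b ≫ w)
    rw [L.len_comp]
    exact Nat.le_add_right _ _
  have himg : g '' M ⊆ Set.Iic (L.len a) := by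
    rintro x ⟨S, ⟨hP, hss⟩, rfl⟩
    obtain ⟨V, c, w, rfl, hcw⟩ := exists_gen a hP hss.subset
    rw [hgval c, Set.mem_Iic, hcw, L.len_comp]
    exact Nat.le_add_right _ _
  have hinj : Set.InjOn g M := by
    rintro S₁ ⟨hP₁, hss₁⟩ S₂ ⟨hP₂, hss₂⟩ heq
    obtain ⟨V₁, c₁, w₁, rfl, h₁⟩ := exists_gen a hP₁ hss₁.subset
    obtain ⟨V₂, c₂, w₂, rfl, h₂⟩ := exists_gen a hP₂ hss₂.subset
    rw [hgval c₁, hgval c₂] at heq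
    have hne : (rIdeal c₁ ∩ rIdeal c₂).Nonempty :=
      ⟨⟨X, Y, a⟩, hss₁.subset (self_mem a), hss₂.subset (self_mem a)⟩
    have key : ∀ {V V' : C} (x : X ⟶ V) (y : X ⟶ V'), L.len x = L.len y →
        rIdeal x ⊆ rIdeal y → rIdeal x = rIdeal y := by
      intro V V' x y hlen hsub
      obtain ⟨s, hs⟩ := (subset_iff x y).mp hsub
      have hs0 : L.len s = 0 := by
        have := hs ▸ hlen
        rw [L.len_comp] at this
        omega
      have : IsIso s := (L.len_eq_zero_iff s).mp hs0
      exact Set.Subset.antisymm hsub ((subset_iff y x).mpr ⟨inv s, by rw [hs]; simp⟩)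
    rcases hRR c₁ c₂ hne with h | h
    · exact key c₁ c₂ heq h
    · exact (key c₂ c₁ heq.symm h).symm
  exact Set.Finite.of_finite_image ((Set.finite_Iic _).subset himg) hinj
lemma rlen_comp (hLC : LeftCancellativeCat C) (hRR : RightRigid C)
    (hFin : ∀ ⦃X Y : C⦄ (a : X ⟶ Y),
      {S : Set (CatArr C) | IsPrincipalRightIdeal S ∧ rIdeal a ⊂ S}.Finite)
    {X Y Z : C} (a : X ⟶ Y) (b : Y ⟶ Z) :
    rlen (a ≫ b) = rlen a + rlen b := by
  classical
  set A : Set (Set (CatArr C)) :=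
    {S | IsPrincipalRightIdeal S ∧ rIdeal (a ≫ b) ⊂ S ∧ S ⊆ rIdeal a} with hA
  set B : Set (Set (CatArr C)) :=
    {S | IsPrincipalRightIdeal S ∧ rIdeal a ⊂ S} with hB
  set T : Set (Set (CatArr C)) :=
    {S | IsPrincipalRightIdeal S ∧ rIdeal b ⊂ S} with hT
  set φ : Set (CatArr C) → Set (CatArr C) :=
    fun T' => {p | ∃ (V : C) (g : Y ⟶ V), (⟨Y, V, g⟩ : CatArr C) ∈ T' ∧ p = ⟨X, V, a ≫ g⟩}
    with hφ
  have hab_sub_a : rIdeal (a ≫ b) ⊆ rIdeal a := (subset_iff _ _).mpr ⟨b, rfl⟩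
  have hphi : ∀ {V : C} (u : Y ⟶ V), φ (rIdeal u) = rIdeal (a ≫ u) := by
    intro V u
    ext p
    constructor
    · rintro ⟨W, g, hg, rfl⟩
      obtain ⟨w, rfl⟩ := (mem_iff u g).mp hg
      exact ⟨W, w, by simp⟩
    · rintro ⟨W, w, rfl⟩
      exact ⟨W, u ≫ w, ⟨W, w, rfl⟩, by simp⟩
  -- decomposition
  have hdecomp : {S : Set (CatArr C) | IsPrincipalRightIdeal S ∧ rIdeal (a ≫ b) ⊂ S}
      = A ∪ B := by
    ext S
    constructor
    · rintro ⟨hP, hss⟩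
      obtain ⟨V, c, w, rfl, hcw⟩ := exists_gen (a ≫ b) hP hss.subset
      have hne : (rIdeal a ∩ rIdeal c).Nonempty :=
        ⟨⟨X, Z, a ≫ b⟩, ⟨Z, b, rfl⟩, hss.subset (self_mem _)⟩
      rcases hRR a c hne with h1 | h1
      · by_cases h2 : rIdeal c ⊆ rIdeal a
        · exact Or.inl ⟨hP, hss, h2⟩
        · exact Or.inr ⟨hP, ssub_iff.mpr ⟨h1, h2⟩⟩
      · exact Or.inl ⟨hP, hss, h1⟩
    · rintro (⟨hP, hss, -⟩ | ⟨hP, hss⟩)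
      · exact ⟨hP, hss⟩
      · refine ⟨hP, ssub_iff.mpr ⟨hab_sub_a.trans hss.subset, fun h2 => ?_⟩⟩
        exact (ssub_iff.mp hss).2 (h2.trans hab_sub_a)
  have hdisj : Disjoint A B := by
    rw [Set.disjoint_left]
    rintro S ⟨-, -, hsub⟩ ⟨-, hss⟩
    exact (ssub_iff.mp hss).2 hsub
  have hAfin : A.Finite := (hFin (a ≫ b)).subset (fun S hS => ⟨hS.1, hS.2.1⟩)
  have hBfin : B.Finite := hFin a
  -- A is the image of T under φ
  have himg : A = φ '' T := by
    apply Set.Subset.antisymm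
    · rintro S ⟨hP, hss, hsub⟩
      obtain ⟨V, c, w, rfl, hcw⟩ := exists_gen (a ≫ b) hP hss.subset
      obtain ⟨u, hu⟩ := (subset_iff c a).mp hsub
      have hb : b = u ≫ w := hLC a _ _ (by rw [← Category.assoc, ← hu, ← hcw])
      refine ⟨rIdeal u, ⟨⟨_, _, u, rfl⟩, ssub_iff.mpr ⟨(subset_iff b u).mpr ⟨w, hb⟩,
        fun h2 => ?_⟩⟩, by rw [hphi u, ← hu]⟩
      obtain ⟨s, hs⟩ := (subset_iff u b).mp h2
      have hc : c = (a ≫ b) ≫ s := by rw [hu, hs, Category.assoc]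
      exact (ssub_iff.mp hss).2 ((subset_iff c (a ≫ b)).mpr ⟨s, hc⟩)
    · rintro S ⟨T', ⟨hPT, hssT⟩, rfl⟩
      obtain ⟨V, u, w, rfl, huw⟩ := exists_gen b hPT hssT.subset
      rw [hphi u]
      refine ⟨⟨_, _, _, rfl⟩, ssub_iff.mpr ⟨(subset_iff _ _).mpr ⟨w, by rw [huw]; simp⟩,
        fun h2 => ?_⟩, (subset_iff _ _).mpr ⟨u, rfl⟩⟩
      obtain ⟨t, ht⟩ := (subset_iff (a ≫ u) (a ≫ b)).mp h2
      have hu' : u = b ≫ t := hLC a _ _ (by rw [ht, Category.assoc])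
      exact (ssub_iff.mp hssT).2 ((subset_iff u b).mpr ⟨t, hu'⟩)
  have hinj : Set.InjOn φ T := by
    rintro T₁ ⟨hP₁, hss₁⟩ T₂ ⟨hP₂, hss₂⟩ heq
    obtain ⟨V₁, u₁, w₁, rfl, h₁⟩ := exists_gen b hP₁ hss₁.subset
    obtain ⟨V₂, u₂, w₂, rfl, h₂⟩ := exists_gen b hP₂ hss₂.subset
    rw [hphi u₁, hphi u₂] at heq
    obtain ⟨s, hs⟩ := (subset_iff (a ≫ u₁) (a ≫ u₂)).mp heq.subset
    obtain ⟨s', hs'⟩ := (subset_iff (a ≫ u₂) (a ≫ u₁)).mp heq.symm.subset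
    have e1 : u₁ = u₂ ≫ s := hLC a _ _ (by rw [hs, Category.assoc])
    have e2 : u₂ = u₁ ≫ s' := hLC a _ _ (by rw [hs', Category.assoc])
    exact Set.Subset.antisymm ((subset_iff _ _).mpr ⟨s, e1⟩) ((subset_iff _ _).mpr ⟨s', e2⟩)
  have hAcard : A.ncard = rlen b := by
    rw [himg, Set.ncard_image_of_injOn hinj]
    rfl
  have : rlen (a ≫ b) = A.ncard + B.ncard := by
    rw [rlen, hdecomp, Set.ncard_union_eq hdisj hAfin hBfin]
  rw [this, hAcard]
  have : B.ncard = rlen a := rfl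
  rw [this, Nat.add_comm]

lemma rlen_eq_one (hLC : LeftCancellativeCat C) (hRR : RightRigid C)
    (hFin : ∀ ⦃X Y : C⦄ (a : X ⟶ Y),
      {S : Set (CatArr C) | IsPrincipalRightIdeal S ∧ rIdeal a ⊂ S}.Finite)
    {X Y : C} (a : X ⟶ Y) : rlen a = 1 ↔ IsAtomArrow a := by
  constructor
  · intro h1
    have hni : ¬ IsIso a := fun h =>
      by simp [(rlen_eq_zero hLC a (hFin a)).mpr h] at h1
    refine ⟨hni, fun Z b c hbc => ?_⟩
    have := rlen_comp hLC hRR hFin b c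
    rw [← hbc, h1] at this
    rcases Nat.add_eq_one_iff.mp this.symm with ⟨hb, -⟩ | ⟨-, hc⟩
    · exact Or.inl ((rlen_eq_zero hLC b (hFin b)).mp hb)
    · exact Or.inr ((rlen_eq_zero hLC c (hFin c)).mp hc)
  · rintro ⟨hni, hatom⟩
    have hset : {S : Set (CatArr C) | IsPrincipalRightIdeal S ∧ rIdeal a ⊂ S}
        = {rIdeal (𝟙 X)} := by
      apply Set.Subset.antisymm
      · rintro S ⟨hP, hss⟩
        obtain ⟨V, c, w, rfl, hcw⟩ := exists_gen a hP hss.subset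
        rcases hatom c w hcw with hc | hw
        · exact Set.mem_singleton_iff.mpr (rIdeal_iso c hc)
        · exfalso
          have : c = a ≫ inv w := by rw [hcw]; simp
          exact (ssub_iff.mp hss).2 ((subset_iff c a).mpr ⟨inv w, this⟩)
      · rintro S rfl
        exact id_mem_total hLC hni
    rw [rlen, hset, Set.ncard_singleton]
end ReesAux

open ReesAux

/-- A left cancellative, right rigid category satisfies the left Rees
finiteness condition iff it admits a length functor; in other words, the left Rees
categories are precisely the left cancellative equidivisible categories equipped with
length functors. -/
theorem leftRees_iff_lengthFunctor (C : Type u) [Category.{v} C] :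
    (LeftCancellativeCat C → RightRigid C →
      ((∀ ⦃X Y : C⦄ (a : X ⟶ Y),
          { S : Set (CatArr C) | IsPrincipalRightIdeal S ∧ rIdeal a ⊂ S }.Finite) ↔
        Nonempty (LengthFunctor C))) ∧
    (IsLeftReesCategory C ↔
      LeftCancellativeCat C ∧ Equidivisible C ∧ Nonempty (LengthFunctor C)) := by
  have main : ∀ (hLC : LeftCancellativeCat C) (hRR : RightRigid C),
      (∀ ⦃X Y : C⦄ (a : X ⟶ Y),
          { S : Set (CatArr C) | IsPrincipalRightIdeal S ∧ rIdeal a ⊂ S }.Finite) ↔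
        Nonempty (LengthFunctor C) := by
    intro hLC hRR
    constructor
    · intro hFin
      exact ⟨{ len := fun _ _ f => rlen f
               len_comp := fun X Y Z f g => rlen_comp hLC hRR hFin f g
               len_eq_zero_iff := fun X Y f => rlen_eq_zero hLC f (hFin f)
               len_eq_one_iff := fun X Y f => rlen_eq_one hLC hRR hFin f }⟩
    · rintro ⟨L⟩ X Y a
      exact finite_of_lengthFunctor hLC hRR L a
  refine ⟨main, ?_, ?_⟩
  · rintro ⟨hLC, hRR, hFin⟩
    exact ⟨hLC, equidiv_of_rigid hLC hRR, (main hLC hRR).mp hFin⟩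
  · rintro ⟨hLC, hEq, hL⟩
    have hRR := rigid_of_equidiv hEq
    exact ⟨hLC, hRR, (main hLC hRR).mpr hL⟩
end

section
/- A category C is isomorphic to the free category on some directed graph if and only if C is a left Rees category in which every invertible arrow is an identity; equivalently, if and only if C is an equidivisible category equipped with a length functor in which every invertible arrow is an identity. -/
open CategoryTheory

universe v u

variable {C : Type u} [Category.{v} C]

/-- `C` is isomorphic (as a category) to the free category on some directed graph. -/
def IsFreeCategory (C : Type u) [Category.{v} C] : Prop :=
  ∃ (V : Type u) (q : Quiver.{v + 1} V) (F : Paths V ⥤ C) (G : C ⥤ Paths V),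
    F ⋙ G = 𝟭 (Paths V) ∧ G ⋙ F = 𝟭 C

/-- Every invertible arrow of `C` is an identity. -/
def OnlyIdentityIsos (C : Type u) [Category.{v} C] : Prop :=
  ∀ ⦃X Y : C⦄ (g : X ⟶ Y), IsIso g → ∃ h : X = Y, g = eqToHom h

/-!
A free category is equidivisible, has the path length as a length functor, and its only
invertible arrows are identities; all three properties transfer along an isomorphism of
categories. Equidivisibility yields right rigidity, and with a length functor it yields left
cancellativity and finiteness (the principal right ideals above `aC` are `xC` for the prefixes
`x` of `a`, one for each length). Conversely, in a left Rees category the number of principal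
right ideals above `aC` is a measure that plays the role of a length. Either measure strictly
grows when an arrow is composed on the right with a non-invertible one, so every arrow is a
composite of atoms. Equidivisibility and left cancellativity make that factorisation unique,
so evaluating paths of atoms is an isomorphism onto `C`.
-/

universe w₁ w₂

lemma mem_rIdeal_self {X Y : C} (f : X ⟶ Y) : (⟨X, Y, f⟩ : CatArr C) ∈ rIdeal f :=
  ⟨Y, 𝟙 Y, by simp⟩

lemma dom_eq_of_mem_rIdeal {U V X Y : C} {x : U ⟶ V} {f : X ⟶ Y}
    (h : (⟨X, Y, f⟩ : CatArr C) ∈ rIdeal x) : X = U := by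
  obtain ⟨Z, w, hw⟩ := h
  exact congrArg Sigma.fst hw

lemma mem_rIdeal_iff {X V Y : C} (x : X ⟶ V) (f : X ⟶ Y) :
    (⟨X, Y, f⟩ : CatArr C) ∈ rIdeal x ↔ ∃ w : V ⟶ Y, f = x ≫ w := by
  constructor
  · rintro ⟨Z, w, hw⟩
    simp only [Sigma.mk.inj_iff, heq_eq_eq, true_and] at hw
    obtain ⟨rfl, hw⟩ := hw
    exact ⟨w, eq_of_heq hw⟩
  · rintro ⟨w, rfl⟩
    exact ⟨Y, w, rfl⟩

lemma rIdeal_subset_iff {X V Y : C} (f : X ⟶ Y) (x : X ⟶ V) :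
    rIdeal f ⊆ rIdeal x ↔ ∃ w : V ⟶ Y, f = x ≫ w := by
  refine ⟨fun h => (mem_rIdeal_iff x f).1 (h (mem_rIdeal_self f)), ?_⟩
  rintro ⟨w, rfl⟩ _ ⟨Z, b, rfl⟩
  exact ⟨Z, w ≫ b, by simp⟩

lemma rIdeal_comp_of_isIso {X Y Z : C} (f : X ⟶ Y) (u : Y ⟶ Z) [IsIso u] :
    rIdeal (f ≫ u) = rIdeal f :=
  subset_antisymm ((rIdeal_subset_iff _ f).2 ⟨u, rfl⟩)
    ((rIdeal_subset_iff f _).2 ⟨inv u, by simp⟩)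

lemma IsPrincipalRightIdeal.exists_eq_rIdeal_of_subset {X Y : C} {a : X ⟶ Y}
    {S : Set (CatArr C)} (hS : IsPrincipalRightIdeal S) (h : rIdeal a ⊆ S) :
    ∃ (V : C) (x : X ⟶ V) (w : V ⟶ Y), S = rIdeal x ∧ a = x ≫ w := by
  obtain ⟨U, V, x, rfl⟩ := hS
  have ha := h (mem_rIdeal_self a)
  obtain rfl := dom_eq_of_mem_rIdeal ha
  obtain ⟨w, hw⟩ := (mem_rIdeal_iff x a).1 ha
  exact ⟨V, x, w, rfl, hw⟩

def rIdealsAbove {X Y : C} (a : X ⟶ Y) : Set (Set (CatArr C)) :=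
  { S | IsPrincipalRightIdeal S ∧ rIdeal a ⊂ S }

lemma LeftCancellativeCat.isIso_of_comp_eq_id (hLC : LeftCancellativeCat C) {X Y : C}
    {c : X ⟶ Y} {u : Y ⟶ X} (h : c ≫ u = 𝟙 X) : IsIso c ∧ IsIso u := by
  have h' : u ≫ c = 𝟙 Y := hLC c _ _ (by rw [← Category.assoc, h]; simp)
  exact ⟨⟨⟨u, h, h'⟩⟩, ⟨⟨c, h', h⟩⟩⟩

lemma LeftCancellativeCat.rIdeal_comp_ssubset (hLC : LeftCancellativeCat C) {X Y Z : C}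
    (b : X ⟶ Y) {c : Y ⟶ Z} (hc : ¬ IsIso c) : rIdeal (b ≫ c) ⊂ rIdeal b := by
  refine ⟨(rIdeal_subset_iff _ b).2 ⟨c, rfl⟩, fun h => hc ?_⟩
  obtain ⟨u, hu⟩ := (rIdeal_subset_iff b _).1 h
  exact (hLC.isIso_of_comp_eq_id (hLC b _ _ (by simpa using hu.symm))).1

lemma LeftCancellativeCat.rIdealsAbove_ssubset (hLC : LeftCancellativeCat C) {X Y Z : C}
    (b : X ⟶ Y) {c : Y ⟶ Z} (hc : ¬ IsIso c) : rIdealsAbove b ⊂ rIdealsAbove (b ≫ c) := by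
  have hbc := hLC.rIdeal_comp_ssubset b hc
  have hsub : rIdealsAbove b ⊆ rIdealsAbove (b ≫ c) := fun S hS => ⟨hS.1, hbc.trans hS.2⟩
  exact (Set.ssubset_iff_of_subset hsub).2
    ⟨rIdeal b, ⟨⟨X, Y, b, rfl⟩, hbc⟩, fun h => h.2.ne rfl⟩

lemma RightRigid.equidivisible (hRR : RightRigid C) (hLC : LeftCancellativeCat C) :
    Equidivisible C := by
  intro W X Y Z a b c d h
  have hab : (⟨W, Z, a ≫ b⟩ : CatArr C) ∈ rIdeal a ∩ rIdeal c :=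
    ⟨⟨Z, b, rfl⟩, ⟨Z, d, by rw [h]⟩⟩
  rcases hRR a c ⟨_, hab⟩ with hac | hca
  · obtain ⟨u, rfl⟩ := (rIdeal_subset_iff a c).1 hac
    exact Or.inl ⟨u, rfl, hLC c _ _ (by simpa using h.symm)⟩
  · obtain ⟨v, rfl⟩ := (rIdeal_subset_iff c a).1 hca
    exact Or.inr ⟨v, rfl, hLC a _ _ (by simpa using h)⟩

lemma Equidivisible.rightRigid (hEq : Equidivisible C) : RightRigid C := by
  rintro X Y X' Y' a b ⟨_, ⟨Z, u, rfl⟩, hb⟩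
  obtain rfl := dom_eq_of_mem_rIdeal hb
  obtain ⟨w, hw⟩ := (mem_rIdeal_iff b _).1 hb
  rcases hEq a u b w hw with ⟨t, ht, -⟩ | ⟨t, ht, -⟩
  · exact Or.inl ((rIdeal_subset_iff a b).2 ⟨t, ht⟩)
  · exact Or.inr ((rIdeal_subset_iff b a).2 ⟨t, ht⟩)

lemma Equidivisible.eq_of_comp_atom_eq (hEq : Equidivisible C) (hOII : OnlyIdentityIsos C)
    {X Y₁ Y₂ Z : C} {g₁ : X ⟶ Y₁} {a₁ : Y₁ ⟶ Z} {g₂ : X ⟶ Y₂} {a₂ : Y₂ ⟶ Z}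
    (h₁ : IsAtomArrow a₁) (h₂ : IsAtomArrow a₂) (h : g₁ ≫ a₁ = g₂ ≫ a₂) :
    Y₁ = Y₂ ∧ HEq g₁ g₂ ∧ HEq a₁ a₂ := by
  rcases hEq g₁ a₁ g₂ a₂ h with ⟨u, hg, ha⟩ | ⟨u, hg, ha⟩
  · obtain ⟨rfl, rfl⟩ := hOII u ((h₂.2 u a₁ ha).resolve_right h₁.1)
    exact ⟨rfl, heq_of_eq (by simpa using hg), heq_of_eq (by simpa using ha.symm)⟩
  · obtain ⟨rfl, rfl⟩ := hOII u ((h₁.2 u a₂ ha).resolve_right h₂.1)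
    exact ⟨rfl, heq_of_eq (by simpa using hg.symm), heq_of_eq (by simpa using ha)⟩

namespace LengthFunctor

lemma len_lt_len_comp (L : LengthFunctor C) {X Y Z : C} (b : X ⟶ Y) {c : Y ⟶ Z}
    (hc : ¬ IsIso c) : L.len b < L.len (b ≫ c) := by
  rw [L.len_comp, lt_add_iff_pos_right, Nat.pos_iff_ne_zero, Ne, L.len_eq_zero_iff]
  exact hc

lemma isIso_of_eq_comp (L : LengthFunctor C) {X Y Z : C} {f : X ⟶ Z} {g : X ⟶ Y} {u : Y ⟶ Z}
    (h : f = g ≫ u) (hlen : L.len f = L.len g) : IsIso u := by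
  by_contra hu
  exact (L.len_lt_len_comp g hu).ne (h ▸ hlen.symm)

lemma leftCancellativeCat (L : LengthFunctor C) (hEq : Equidivisible C)
    (hOII : OnlyIdentityIsos C) : LeftCancellativeCat C := by
  intro X Y Z a x y h
  have collapse : ∀ {x' y' : Y ⟶ Z} (u : Y ⟶ Y), a = a ≫ u → y' = u ≫ x' → x' = y' := by
    intro x' y' u hu hy
    obtain ⟨_, rfl⟩ := hOII u (L.isIso_of_eq_comp hu rfl)
    simpa using hy.symm
  rcases hEq a x a y h with ⟨u, hu, hy⟩ | ⟨u, hu, hx⟩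
  · exact collapse u hu hy
  · exact (collapse u hu hx).symm

lemma finite_rIdealsAbove (L : LengthFunctor C) (hEq : Equidivisible C) {X Y : C} (a : X ⟶ Y) :
    (rIdealsAbove a).Finite := by
  choose V x w hS ha using
    fun S : rIdealsAbove a => S.2.1.exists_eq_rIdeal_of_subset S.2.2.subset
  have hlen (S : rIdealsAbove a) : L.len (x S) < L.len a + 1 := by
    rw [ha S, L.len_comp]; omega
  -- A principal right ideal above `aC` is determined by the length of its generator.
  have hinj : Function.Injective fun S => (⟨L.len (x S), hlen S⟩ : Fin (L.len a + 1)) := by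
    intro S T hST
    replace hST : L.len (x S) = L.len (x T) := congrArg Fin.val hST
    refine Subtype.ext ((hS S).trans (Eq.trans ?_ (hS T).symm))
    rcases hEq (x S) (w S) (x T) (w T) ((ha S).symm.trans (ha T)) with ⟨u, hu, -⟩ | ⟨u, hu, -⟩
    · have := L.isIso_of_eq_comp hu hST
      rw [hu, rIdeal_comp_of_isIso]
    · have := L.isIso_of_eq_comp hu hST.symm
      rw [hu, rIdeal_comp_of_isIso]
  exact Set.finite_coe_iff.1 (Finite.of_injective _ hinj)

end LengthFunctor

namespace CategoryTheory.Paths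

variable {V : Type w₁} [Quiver.{w₂} V]

lemma isIso_iff_length_eq_zero {X Y : Paths V} (p : X ⟶ Y) :
    IsIso p ↔ Quiver.Path.length p = 0 := by
  constructor
  · intro _
    have h : Quiver.Path.length (p ≫ inv p) = 0 :=
      congrArg Quiver.Path.length (IsIso.hom_inv_id p)
    exact (Nat.eq_zero_of_add_eq_zero ((Quiver.Path.length_comp p (inv p)).symm.trans h)).1
  · intro h
    obtain rfl := Quiver.Path.eq_of_length_zero p h
    obtain rfl := Quiver.Path.eq_nil_of_length_zero p h
    exact (inferInstance : IsIso (𝟙 X))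

lemma onlyIdentityIsos : OnlyIdentityIsos (Paths V) := by
  intro X Y p hp
  rw [isIso_iff_length_eq_zero] at hp
  obtain rfl := Quiver.Path.eq_of_length_zero p hp
  exact ⟨rfl, Quiver.Path.eq_nil_of_length_zero p hp⟩

lemma isAtomArrow_iff_length_eq_one {X Y : Paths V} (p : X ⟶ Y) :
    IsAtomArrow p ↔ Quiver.Path.length p = 1 := by
  constructor
  · rintro ⟨hp, hfac⟩
    rw [isIso_iff_length_eq_zero] at hp
    obtain ⟨Z, q, e, rfl⟩ := (Quiver.Path.length_ne_zero_iff_eq_cons p).1 hp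
    rcases hfac q e.toPath rfl with hq | he
    · exact congrArg Nat.succ ((isIso_iff_length_eq_zero q).1 hq)
    · exact absurd ((isIso_iff_length_eq_zero e.toPath).1 he) one_ne_zero
  · intro h
    refine ⟨by rw [isIso_iff_length_eq_zero]; omega, fun Z b c hbc => ?_⟩
    have hlen := (Quiver.Path.length_comp b c).symm.trans
      ((congrArg Quiver.Path.length hbc).symm.trans h)
    simp only [isIso_iff_length_eq_zero]
    omega

def lengthFunctor : LengthFunctor (Paths V) where
  len _ _ p := Quiver.Path.length p
  len_comp _ _ _ p q := Quiver.Path.length_comp p q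
  len_eq_zero_iff _ _ p := (isIso_iff_length_eq_zero p).symm
  len_eq_one_iff _ _ p := (isAtomArrow_iff_length_eq_one p).symm

lemma equidivisible : Equidivisible (Paths V) := by
  suffices h : ∀ {Y Z : V} (d : Quiver.Path Y Z) {W X : V} (a : Quiver.Path W X)
      (b : Quiver.Path X Z) (c : Quiver.Path W Y), a.comp b = c.comp d →
      (∃ u : Quiver.Path Y X, a = c.comp u ∧ d = u.comp b) ∨
      (∃ v : Quiver.Path X Y, c = a.comp v ∧ b = v.comp d) from
    fun W X Y Z a b c d => h d a b c
  intro Y Z d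
  induction d with
  | nil => exact fun a b c h => Or.inr ⟨b, by simpa using h.symm, by simp⟩
  | cons d e ih =>
    intro W X a b c h
    cases b with
    | nil => exact Or.inl ⟨d.cons e, by simpa using h, by simp⟩
    | cons b e' =>
      obtain ⟨rfl, hbd, hee⟩ : _ ∧ HEq (a.comp b) (c.comp d) ∧ HEq e' e :=
        Quiver.Path.cons.inj h
      obtain rfl := eq_of_heq hee
      rcases ih a b c (eq_of_heq hbd) with ⟨u, hu, rfl⟩ | ⟨v, hv, rfl⟩
      · exact Or.inl ⟨u, hu, rfl⟩
      · exact Or.inr ⟨v, hv, rfl⟩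

end CategoryTheory.Paths

section Transport

variable {D : Type w₁} [Category.{w₂} D] (G : C ⥤ D)

lemma Equidivisible.of_full_faithful [G.Full] [G.Faithful] (h : Equidivisible D) :
    Equidivisible C := by
  intro W X Y Z a b c d hab
  rcases h (G.map a) (G.map b) (G.map c) (G.map d) (by simp only [← G.map_comp, hab]) with
    ⟨u, hu, hd⟩ | ⟨v, hv, hb⟩
  · exact Or.inl ⟨G.preimage u, G.map_injective (by simpa using hu),
      G.map_injective (by simpa using hd)⟩
  · exact Or.inr ⟨G.preimage v, G.map_injective (by simpa using hv),
      G.map_injective (by simpa using hb)⟩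

lemma OnlyIdentityIsos.of_faithful [G.Faithful] (hG : Function.Injective G.obj)
    (h : OnlyIdentityIsos D) : OnlyIdentityIsos C := by
  intro X Y g hg
  obtain ⟨e, he⟩ := h (G.map g) inferInstance
  obtain rfl := hG e
  exact ⟨rfl, G.map_injective (by simpa using he)⟩

lemma CategoryTheory.Functor.isAtomArrow_map_iff [G.Full] [G.Faithful]
    (hG : Function.Surjective G.obj) {X Y : C} (f : X ⟶ Y) :
    IsAtomArrow (G.map f) ↔ IsAtomArrow f := by
  simp only [IsAtomArrow, isIso_iff_of_reflects_iso]
  refine and_congr_right fun _ => ⟨fun h Z b c hbc => ?_, fun h Z b c hbc => ?_⟩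
  · simpa only [isIso_iff_of_reflects_iso] using h (G.map b) (G.map c) (by simp [hbc])
  · obtain ⟨Z, rfl⟩ := hG Z
    have := h (G.preimage b) (G.preimage c) (G.map_injective (by simpa using hbc))
    rwa [← isIso_iff_of_reflects_iso _ G, ← isIso_iff_of_reflects_iso (G.preimage c) G,
      G.map_preimage, G.map_preimage] at this

def LengthFunctor.comap [G.Full] [G.Faithful] (hG : Function.Surjective G.obj)
    (L : LengthFunctor D) : LengthFunctor C where
  len _ _ f := L.len (G.map f)
  len_comp _ _ _ f g := by simp only [G.map_comp, L.len_comp]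
  len_eq_zero_iff _ _ f := (L.len_eq_zero_iff _).trans (isIso_iff_of_reflects_iso f G)
  len_eq_one_iff _ _ f := (L.len_eq_one_iff _).trans (G.isAtomArrow_map_iff hG f)

end Transport

lemma IsFreeCategory.exists_isIso (h : IsFreeCategory C) :
    ∃ (V : Type u) (_ : Quiver.{v + 1} V) (G : C ⥤ Paths V), G.IsIso := by
  obtain ⟨V, q, F, G, hFG, hGF⟩ := h
  exact ⟨V, q, G, (IsoCat.mk G F hGF.symm hFG).isIso_functor⟩

lemma isFreeCategory_of_isIso {V : Type u} [Quiver.{v + 1} V] (F : Paths V ⥤ C) [F.IsIso] :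
    IsFreeCategory C :=
  ⟨V, inferInstance, F, F.strictInv, F.asIsomorphism.unit_eq.symm, F.asIsomorphism.counit_eq⟩

lemma IsFreeCategory.equidivisible_lengthFunctor_onlyIdentityIsos (h : IsFreeCategory C) :
    Equidivisible C ∧ Nonempty (LengthFunctor C) ∧ OnlyIdentityIsos C := by
  obtain ⟨V, _, G, _⟩ := h.exists_isIso
  exact ⟨Paths.equidivisible.of_full_faithful G,
    ⟨Paths.lengthFunctor.comap G G.bijective_obj.2⟩,
    Paths.onlyIdentityIsos.of_faithful G G.bijective_obj.1⟩

def Atoms (C : Type u) [Category.{v} C] : Type u := C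

@[ext]
structure AtomArrow (X Y : C) : Type (v + 1) where
  hom : X ⟶ Y
  isAtom : IsAtomArrow hom

instance : Quiver.{v + 1} (Atoms C) where
  Hom := fun (X Y : C) => AtomArrow X Y

abbrev Atoms.incl : Atoms C ⥤q C where
  obj X := X
  map f := AtomArrow.hom f

variable (C) in
abbrev Atoms.eval : Paths (Atoms C) ⥤ C := Paths.lift Atoms.incl

lemma Atoms.eval_map_injective (hLC : LeftCancellativeCat C) (hEq : Equidivisible C)
    (hOII : OnlyIdentityIsos C) {X Y : Atoms C} (p q : Quiver.Path X Y)
    (h : (Atoms.eval C).map p = (Atoms.eval C).map q) : p = q := by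
  induction p with
  | nil =>
    cases q with
    | nil => rfl
    | cons q e => exact absurd (hLC.isIso_of_comp_eq_id h.symm).2 e.isAtom.1
  | cons p e ih =>
    cases q with
    | nil => exact absurd (hLC.isIso_of_comp_eq_id h).2 e.isAtom.1
    | cons q e' =>
      obtain ⟨rfl, hpq, hee'⟩ := hEq.eq_of_comp_atom_eq hOII e.isAtom e'.isAtom h
      rw [ih q (eq_of_heq hpq), AtomArrow.ext (eq_of_heq hee')]

lemma Atoms.eval_full (hOII : OnlyIdentityIsos C) (μ : ∀ ⦃X Y : C⦄, (X ⟶ Y) → ℕ)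
    (hμ : ∀ ⦃X Y Z : C⦄ (b : X ⟶ Y) (c : Y ⟶ Z), ¬ IsIso c → μ b < μ (b ≫ c)) :
    (Atoms.eval C).Full := by
  -- Induct on `μ (x ≫ w) - μ x`, which drops for both halves of a proper factorisation of `w`.
  suffices h : ∀ n ⦃X Y Z : C⦄ (x : X ⟶ Y) (w : Y ⟶ Z), μ (x ≫ w) - μ x = n →
      ∃ p : Quiver.Path (V := Atoms C) Y Z, (Atoms.eval C).map p = w from
    ⟨fun {X Y} f => h _ (𝟙 ((Atoms.eval C).obj X)) f rfl⟩
  intro n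
  induction n using Nat.strong_induction_on with
  | _ n ih =>
  intro X Y Z x w hn
  by_cases hw : IsIso w
  · obtain ⟨e, rfl⟩ := hOII w hw
    subst e
    exact ⟨Quiver.Path.nil, rfl⟩
  by_cases hat : IsAtomArrow w
  · exact ⟨Quiver.Hom.toPath (V := Atoms C) (AtomArrow.mk w hat), Paths.lift_toPath _ _⟩
  obtain ⟨W, b, c, rfl, hb, hc⟩ :
      ∃ (W : C) (b : Y ⟶ W) (c : W ⟶ Z), w = b ≫ c ∧ ¬ IsIso b ∧ ¬ IsIso c := by
    simpa [IsAtomArrow, hw] using hat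
  have hxb := hμ x b hb
  have hxbc := hμ (x ≫ b) c hc
  rw [← Category.assoc] at hn
  obtain ⟨p, hp⟩ := ih (μ (x ≫ b) - μ x) (by omega) x b rfl
  obtain ⟨q, hq⟩ := ih (μ ((x ≫ b) ≫ c) - μ (x ≫ b)) (by omega) (x ≫ b) c rfl
  exact ⟨p.comp q, ((Atoms.eval C).map_comp p q).trans (congrArg₂ _ hp hq)⟩

lemma isFreeCategory_of_measure_lt_comp (hLC : LeftCancellativeCat C) (hEq : Equidivisible C)
    (hOII : OnlyIdentityIsos C) (μ : ∀ ⦃X Y : C⦄, (X ⟶ Y) → ℕ)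
    (hμ : ∀ ⦃X Y Z : C⦄ (b : X ⟶ Y) (c : Y ⟶ Z), ¬ IsIso c → μ b < μ (b ≫ c)) :
    IsFreeCategory C :=
  have : (Atoms.eval C).Faithful := ⟨Atoms.eval_map_injective hLC hEq hOII _ _⟩
  have := Atoms.eval_full hOII μ hμ
  have : (Atoms.eval C).IsIso := { bijective_obj := Function.bijective_id }
  isFreeCategory_of_isIso (Atoms.eval C)

/-- A category is isomorphic to a free category on a directed graph iff it
is a left Rees category whose only invertible arrows are identities, equivalently iff it
is an equidivisible category with a length functor whose only invertible arrows are
identities. -/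
theorem free_iff_leftRees_trivial_isos (C : Type u) [Category.{v} C] :
    (IsFreeCategory C ↔ IsLeftReesCategory C ∧ OnlyIdentityIsos C) ∧
    (IsFreeCategory C ↔
      Equidivisible C ∧ Nonempty (LengthFunctor C) ∧ OnlyIdentityIsos C) := by
  have hLength : IsFreeCategory C ↔
      Equidivisible C ∧ Nonempty (LengthFunctor C) ∧ OnlyIdentityIsos C := by
    refine ⟨IsFreeCategory.equidivisible_lengthFunctor_onlyIdentityIsos, ?_⟩
    rintro ⟨hEq, ⟨L⟩, hOII⟩
    exact isFreeCategory_of_measure_lt_comp (L.leftCancellativeCat hEq hOII) hEq hOII L.len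
      fun _ _ _ b _ hc => L.len_lt_len_comp b hc
  refine ⟨⟨fun h => ?_, ?_⟩, hLength⟩
  · obtain ⟨hEq, ⟨L⟩, hOII⟩ := hLength.1 h
    exact ⟨⟨L.leftCancellativeCat hEq hOII, hEq.rightRigid,
      fun _ _ a => L.finite_rIdealsAbove hEq a⟩, hOII⟩
  · rintro ⟨⟨hLC, hRR, hFin⟩, hOII⟩
    exact isFreeCategory_of_measure_lt_comp hLC (hRR.equidivisible hLC) hOII
      (fun _ _ a => (rIdealsAbove a).ncard)
      fun _ _ _ b _ hc => Set.ncard_lt_ncard (hLC.rIdealsAbove_ssubset b hc) (hFin _)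
end

section
/- Let C be a left Rees category and let a, b be arrows with the product ab defined. Then: (i) the map xC ↦ axC is a bijection from [bC, d(b)C] onto [abC, aC] (in particular a[bC, d(b)C] = [abC, aC], and axC = ax'C with bC ⊆ xC, x'C ⊆ d(b)C implies xC = x'C); (ii) [abC, d(a)C] = a[bC, d(b)C] ∪ [aC, d(a)C]. -/
open CategoryTheory

universe v u

variable {C : Type u} [Category.{v} C]

lemma mem_self_rIdeal {X Z : C} (f : X ⟶ Z) : (⟨X, Z, f⟩ : CatArr C) ∈ rIdeal f :=
  ⟨Z, 𝟙 Z, by simp⟩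

lemma factor_of_mem {X Z W : C} {f : X ⟶ Z} {g : X ⟶ W}
    (hm : (⟨X, Z, f⟩ : CatArr C) ∈ rIdeal g) : ∃ u : W ⟶ Z, f = g ≫ u := by
  obtain ⟨Z', u, hu⟩ := hm
  obtain ⟨h1, h2⟩ := Sigma.mk.inj_iff.mp hu
  obtain ⟨h3, h4⟩ := Sigma.mk.inj_iff.mp (eq_of_heq h2)
  subst h3
  exact ⟨u, eq_of_heq h4⟩

lemma dom_eq_of_mem {U V X Y : C} {c : U ⟶ V} {a : X ⟶ Y}
    (hm : (⟨U, V, c⟩ : CatArr C) ∈ rIdeal a) : U = X := by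
  obtain ⟨Z', u, hu⟩ := hm
  exact (Sigma.mk.inj_iff.mp hu).1

lemma rIdeal_comp_subset {X W Z : C} (g : X ⟶ W) (u : W ⟶ Z) :
    rIdeal (g ≫ u) ⊆ rIdeal g := by
  rintro p ⟨Z', v, rfl⟩
  exact ⟨Z', u ≫ v, by simp⟩

lemma rIdeal_subset_of_factor {X W Z : C} {f : X ⟶ Z} {g : X ⟶ W} (u : W ⟶ Z)
    (hf : f = g ≫ u) : rIdeal f ⊆ rIdeal g := by
  subst hf; exact rIdeal_comp_subset g u

lemma factor_of_subset {X Z W : C} {f : X ⟶ Z} {g : X ⟶ W}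
    (hs : rIdeal f ⊆ rIdeal g) : ∃ u : W ⟶ Z, f = g ≫ u :=
  factor_of_mem (hs (mem_self_rIdeal f))

lemma rIdeal_subset_id {Y W : C} (x : Y ⟶ W) : rIdeal x ⊆ rIdeal (𝟙 Y) := by
  rintro p ⟨Z', v, rfl⟩
  exact ⟨Z', x ≫ v, by simp⟩

/-- In a left Rees category, for composable `a`, `b`:
(i) `xC ↦ axC` is a bijection from `[bC, d(b)C]` onto `[abC, aC]` (so
`a[bC, d(b)C] = [abC, aC]`, and `axC = ax'C` for `xC, x'C ∈ [bC, d(b)C]` implies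
`xC = x'C`); (ii) `[abC, d(a)C] = a[bC, d(b)C] ∪ [aC, d(a)C]`. -/
theorem interval_translation (h : IsLeftReesCategory C)
    {X Y Z : C} (a : X ⟶ Y) (b : Y ⟶ Z) :
    ({ S : Set (CatArr C) | ∃ (W : C) (x : Y ⟶ W),
          rIdeal b ⊆ rIdeal x ∧ rIdeal x ⊆ rIdeal (𝟙 Y) ∧ S = rIdeal (a ≫ x) } =
        rInterval (a ≫ b) a) ∧
    (∀ (W W' : C) (x : Y ⟶ W) (x' : Y ⟶ W'),
        rIdeal b ⊆ rIdeal x → rIdeal b ⊆ rIdeal x' →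
        rIdeal (a ≫ x) = rIdeal (a ≫ x') → rIdeal x = rIdeal x') ∧
    (rInterval (a ≫ b) (𝟙 X) =
      { S : Set (CatArr C) | ∃ (W : C) (x : Y ⟶ W),
          rIdeal b ⊆ rIdeal x ∧ rIdeal x ⊆ rIdeal (𝟙 Y) ∧ S = rIdeal (a ≫ x) } ∪
        rInterval a (𝟙 X)) := by
  obtain ⟨hlc, hrr, _⟩ := h
  refine ⟨?_, ?_, ?_⟩
  · ext S
    constructor
    · rintro ⟨W, x, hbx, -, rfl⟩
      obtain ⟨u, hu⟩ := factor_of_subset hbx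
      refine ⟨⟨X, W, a ≫ x, rfl⟩, ?_, rIdeal_comp_subset a x⟩
      exact rIdeal_subset_of_factor u (by rw [hu, Category.assoc])
    · rintro ⟨⟨U, V, c, rfl⟩, habc, hca⟩
      have hUX : U = X := dom_eq_of_mem (hca (mem_self_rIdeal c))
      subst hUX
      obtain ⟨x, hx⟩ := factor_of_subset hca
      subst hx
      obtain ⟨u, hu⟩ := factor_of_subset habc
      rw [Category.assoc] at hu
      have hb : b = x ≫ u := hlc a _ _ hu
      exact ⟨V, x, rIdeal_subset_of_factor u hb, rIdeal_subset_id x, rfl⟩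
  · intro W W' x x' _ _ heq
    have h1 : ∃ u : W' ⟶ W, a ≫ x = (a ≫ x') ≫ u :=
      factor_of_subset (le_of_eq heq)
    have h2 : ∃ u : W ⟶ W', a ≫ x' = (a ≫ x) ≫ u :=
      factor_of_subset (le_of_eq heq.symm)
    obtain ⟨u, hu⟩ := h1
    obtain ⟨v, hv⟩ := h2
    rw [Category.assoc] at hu hv
    have hx : x = x' ≫ u := hlc a _ _ hu
    have hx' : x' = x ≫ v := hlc a _ _ hv
    exact le_antisymm (rIdeal_subset_of_factor u hx) (rIdeal_subset_of_factor v hx')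
  · ext S
    constructor
    · rintro ⟨⟨U, V, c, rfl⟩, habc, -⟩
      have hUX : X = U := dom_eq_of_mem (habc (mem_self_rIdeal (a ≫ b)))
      subst hUX
      have hne : (rIdeal a ∩ rIdeal c).Nonempty :=
        ⟨⟨X, Z, a ≫ b⟩, ⟨Z, b, rfl⟩, habc (mem_self_rIdeal (a ≫ b))⟩
      rcases hrr a c hne with hac | hca
      · exact Or.inr ⟨⟨X, V, c, rfl⟩, hac, rIdeal_subset_id c⟩
      · obtain ⟨x, hx⟩ := factor_of_subset hca
        subst hx
        obtain ⟨u, hu⟩ := factor_of_subset habc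
        rw [Category.assoc] at hu
        have hb : b = x ≫ u := hlc a _ _ hu
        exact Or.inl ⟨V, x, rIdeal_subset_of_factor u hb, rIdeal_subset_id x, rfl⟩
    · rintro (⟨W, x, hbx, -, rfl⟩ | ⟨hp, haS, -⟩)
      · obtain ⟨u, hu⟩ := factor_of_subset hbx
        refine ⟨⟨X, W, a ≫ x, rfl⟩, ?_, rIdeal_subset_id _⟩
        exact rIdeal_subset_of_factor u (by rw [hu, Category.assoc])
      · exact ⟨hp, fun p hp' => haS (rIdeal_comp_subset a b hp'), by
          obtain ⟨U, V, c, rfl⟩ := hp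
          have hUX : X = U := dom_eq_of_mem (haS (mem_self_rIdeal a))
          subst hUX
          exact rIdeal_subset_id c⟩
end
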